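/- arXiv:1901.01516 — 3 statements merged into one kernel-verified Lean document; each statement's English description precedes it below -/
import Mathlib

section
/- Let V = V₁ × V₂ be a product of real Hilbert spaces, with symmetric positive semidefinite bounded bilinear forms a₁ on V₁, a₂ on V₂, and a_Γ on V (acting on the 'jump'), bounded linear functionals l₁, l₂, and total energy E(u₁,u₂) = (1/2)(a₁(u₁,u₁) + a₂(u₂,u₂) + a_Γ((u₁,u₂),(u₁,u₂))) − l₁(u₁) − l₂(u₂). Suppose (u₁^m, u₂^m) are generated by the alternating (Gauss–Seidel type) scheme: u₁^m solves the first-coordinate Euler–Lagrange equation of E with u₂ = u₂^{m−1} fixed, and u₂^m solves the second-coordinate equation with u₁ = u₁^m fixed. Then E(u₁^{m−1}, u₂^{m−1}) ≥ E(u₁^m, u₂^{m−1}) ≥ E(u₁^m, u₂^m) for all m ≥ 1. -/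
/-- Energy monotone decay for the alternating (Gauss–Seidel type) scheme
for the glued elasticity energy (Theorem 4.1 of the paper). -/
theorem stmt3
    {V₁ V₂ W : Type*}
    [NormedAddCommGroup V₁] [InnerProductSpace ℝ V₁] [CompleteSpace V₁]
    [NormedAddCommGroup V₂] [InnerProductSpace ℝ V₂] [CompleteSpace V₂]
    [NormedAddCommGroup W] [InnerProductSpace ℝ W] [CompleteSpace W]
    (a₁ : V₁ →L[ℝ] V₁ →L[ℝ] ℝ) (a₂ : V₂ →L[ℝ] V₂ →L[ℝ] ℝ)
    (c : W →L[ℝ] W →L[ℝ] ℝ)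
    (T₁ : V₁ →L[ℝ] W) (T₂ : V₂ →L[ℝ] W)
    (hsym₁ : ∀ u v, a₁ u v = a₁ v u) (hpsd₁ : ∀ v, 0 ≤ a₁ v v)
    (hsym₂ : ∀ u v, a₂ u v = a₂ v u) (hpsd₂ : ∀ v, 0 ≤ a₂ v v)
    (hsymc : ∀ u v, c u v = c v u) (hpsdc : ∀ v, 0 ≤ c v v)
    (l₁ : V₁ →L[ℝ] ℝ) (l₂ : V₂ →L[ℝ] ℝ)
    (E : V₁ → V₂ → ℝ)
    (hE : ∀ u₁ u₂, E u₁ u₂ =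
      (1 / 2) * (a₁ u₁ u₁ + a₂ u₂ u₂ + c (T₂ u₂ - T₁ u₁) (T₂ u₂ - T₁ u₁))
        - l₁ u₁ - l₂ u₂)
    (u₁ : ℕ → V₁) (u₂ : ℕ → V₂)
    (hstep1 : ∀ m : ℕ, ∀ v₁ : V₁,
      a₁ (u₁ (m + 1)) v₁ + c (T₁ (u₁ (m + 1))) (T₁ v₁)
        = c (T₂ (u₂ m)) (T₁ v₁) + l₁ v₁)
    (hstep2 : ∀ m : ℕ, ∀ v₂ : V₂,
      a₂ (u₂ (m + 1)) v₂ + c (T₂ (u₂ (m + 1))) (T₂ v₂)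
        = c (T₁ (u₁ (m + 1))) (T₂ v₂) + l₂ v₂) :
    ∀ m : ℕ, E (u₁ (m + 1)) (u₂ m) ≤ E (u₁ m) (u₂ m) ∧
      E (u₁ (m + 1)) (u₂ (m + 1)) ≤ E (u₁ (m + 1)) (u₂ m) := by
  intro m
  set u := u₁ (m + 1) with hu
  set w := u₂ m with hw
  constructor
  · -- first inequality
    set d : V₁ := u₁ m - u with hd
    have hv : u₁ m = u + d := by simp [hd]
    have key := hstep1 m d
    have hBd : c (T₂ w - T₁ u) (T₁ d) = a₁ u d - l₁ d := by
      have : c (T₂ w - T₁ u) (T₁ d) = c (T₂ w) (T₁ d) - c (T₁ u) (T₁ d) := by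
        simp [map_sub, ContinuousLinearMap.sub_apply]
      rw [this]; linarith [key]
    have e1 : a₁ (u + d) (u + d) = a₁ u u + 2 * a₁ u d + a₁ d d := by
      simp only [map_add, ContinuousLinearMap.add_apply]
      rw [hsym₁ d u]; ring
    have e2 : c (T₂ w - T₁ (u + d)) (T₂ w - T₁ (u + d))
        = c (T₂ w - T₁ u) (T₂ w - T₁ u) - 2 * c (T₂ w - T₁ u) (T₁ d)
          + c (T₁ d) (T₁ d) := by
      have h : T₂ w - T₁ (u + d) = (T₂ w - T₁ u) - T₁ d := by
        rw [map_add]; abel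
      rw [h]
      simp only [map_sub, ContinuousLinearMap.sub_apply]
      rw [hsymc (T₁ d) (T₂ w), hsymc (T₁ d) (T₁ u)]; ring
    have el : l₁ (u + d) = l₁ u + l₁ d := map_add l₁ u d
    have hpos : 0 ≤ a₁ d d + c (T₁ d) (T₁ d) := by
      have := hpsd₁ d; have := hpsdc (T₁ d); linarith
    rw [hE, hE, hv, e1, e2, el, hBd]
    nlinarith [hpos]
  · -- second inequality
    set d : V₂ := u₂ (m + 1) - w with hd
    have hv : u₂ (m + 1) = w + d := by simp [hd]
    have key := hstep2 m d
    have hBd : c (T₂ w - T₁ u) (T₂ d)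
        = l₂ d - a₂ w d - a₂ d d - c (T₂ d) (T₂ d) := by
      have h1 : c (T₂ w - T₁ u) (T₂ d) = c (T₂ w) (T₂ d) - c (T₁ u) (T₂ d) := by
        simp [map_sub, ContinuousLinearMap.sub_apply]
      have h2 : c (T₂ (u₂ (m + 1))) (T₂ d) = c (T₂ w) (T₂ d) + c (T₂ d) (T₂ d) := by
        rw [hv, map_add]; simp [ContinuousLinearMap.add_apply]
      have h4 : a₂ (u₂ (m + 1)) d = a₂ w d + a₂ d d := by
        rw [hv, map_add]; simp [ContinuousLinearMap.add_apply]
      rw [h1]; linarith [key]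
    have e1 : a₂ (w + d) (w + d) = a₂ w w + 2 * a₂ w d + a₂ d d := by
      simp only [map_add, ContinuousLinearMap.add_apply]
      rw [hsym₂ d w]; ring
    have e2 : c (T₂ (w + d) - T₁ u) (T₂ (w + d) - T₁ u)
        = c (T₂ w - T₁ u) (T₂ w - T₁ u) + 2 * c (T₂ w - T₁ u) (T₂ d)
          + c (T₂ d) (T₂ d) := by
      have h : T₂ (w + d) - T₁ u = (T₂ w - T₁ u) + T₂ d := by
        rw [map_add]; abel
      rw [h]
      simp only [map_add, ContinuousLinearMap.add_apply, map_sub,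
        ContinuousLinearMap.sub_apply]
      rw [hsymc (T₂ d) (T₂ w), hsymc (T₂ d) (T₁ u)]; ring
    have el : l₂ (w + d) = l₂ w + l₂ d := map_add l₂ w d
    have hpos : 0 ≤ a₂ d d + c (T₂ d) (T₂ d) := by
      have := hpsd₂ d; have := hpsdc (T₂ d); linarith
    rw [hE, hE, hv, e1, e2, el, hBd]
    nlinarith [hpos]
end

section
/- Let A₁ be symmetric positive definite on ℝ^{n_I+n_B} with ⟨A₁w, w⟩ ≥ α₁β₁ ‖w_B‖_M² (w_B the second block of w), M symmetric positive definite on ℝ^{n_B}, and define Ã₁ = A₁ + diag(0, M) (adding M to the (B,B)-block). If Ã₁ e₁ = (0, M e₂^{prev})ᵀ for some e₁ = (e_{1,I}, e_{1,B}) and e₂^{prev} ∈ ℝ^{n_B}, then ‖e_{1,B}‖_M ≤ r ‖e₂^{prev}‖_M with r = 1/(1 + α₁ β₁) < 1. -/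
/-!
Pairing the error equation with `e₁` gives the energy identity
`⟨A₁ e₁, e₁⟩ + ‖e_{1,B}‖²_M = ⟨M e₂, e_{1,B}⟩`. Coercivity bounds the left side below by
`(1 + α₁β₁) ‖e_{1,B}‖²_M`, and Cauchy–Schwarz in the `M`-inner product bounds the right side by
`‖e₂‖_M ‖e_{1,B}‖_M`; dividing by `‖e_{1,B}‖_M` gives the contraction.
-/

open Matrix

theorem Matrix.PosSemidef.dotProduct_mulVec_le_sqrt_mul_sqrt {n : Type*} [Fintype n]
    {M : Matrix n n ℝ} (hM : M.PosSemidef) (x y : n → ℝ) :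
    M *ᵥ x ⬝ᵥ y ≤ √(M *ᵥ x ⬝ᵥ x) * √(M *ᵥ y ⬝ᵥ y) := by
  -- In the inner product space induced by `M`, `⟪y, x⟫ = M x ⬝ᵥ y` and `‖x‖ = √(M x ⬝ᵥ x)`
  -- hold definitionally.
  let := M.toSeminormedAddCommGroup hM
  let := M.toInnerProductSpace hM
  rw [mul_comm]
  exact real_inner_le_norm y x

section Blocks

variable {ι κ R : Type*} [Fintype ι] [Fintype κ] [CommSemiring R]

theorem Matrix.fromBlocks_zero_zero_zero_mulVec_dotProduct (M : Matrix κ κ R) (w : ι ⊕ κ → R) :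
    fromBlocks 0 0 0 M *ᵥ w ⬝ᵥ w = M *ᵥ (w ∘ Sum.inr) ⬝ᵥ (w ∘ Sum.inr) := by
  rw [← Sum.elim_comp_inl_inr w, fromBlocks_mulVec, sumElim_dotProduct_sumElim]
  simp

theorem Matrix.sumElim_zero_dotProduct (v : κ → R) (w : ι ⊕ κ → R) :
    Sum.elim (0 : ι → R) v ⬝ᵥ w = v ⬝ᵥ (w ∘ Sum.inr) := by
  rw [← Sum.elim_comp_inl_inr w, sumElim_dotProduct_sumElim]
  simp

theorem Matrix.dotProduct_add_eq_of_mulVec_add_fromBlocks_eq (A : Matrix (ι ⊕ κ) (ι ⊕ κ) R)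
    (M : Matrix κ κ R) {w : ι ⊕ κ → R} {v : κ → R}
    (h : (A + fromBlocks 0 0 0 M) *ᵥ w = Sum.elim (0 : ι → R) (M *ᵥ v)) :
    A *ᵥ w ⬝ᵥ w + M *ᵥ (w ∘ Sum.inr) ⬝ᵥ (w ∘ Sum.inr) = M *ᵥ v ⬝ᵥ (w ∘ Sum.inr) := by
  rw [← fromBlocks_zero_zero_zero_mulVec_dotProduct (ι := ι), ← add_dotProduct, ← add_mulVec, h,
    sumElim_zero_dotProduct]

end Blocks

theorem mul_le_of_mul_sq_le_mul {k a b : ℝ} (ha : 0 ≤ a) (hb : 0 ≤ b) (h : k * a ^ 2 ≤ b * a) :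
    k * a ≤ b := by
  rcases ha.eq_or_lt with rfl | ha
  · simpa using hb
  · exact le_of_mul_le_mul_right (by linarith) ha

theorem stmt8_general {nI nB : ℕ}
    (A₁ : Matrix (Fin nI ⊕ Fin nB) (Fin nI ⊕ Fin nB) ℝ)
    (M : Matrix (Fin nB) (Fin nB) ℝ) (hM : M.PosDef)
    (α₁ β₁ : ℝ) (hα : 0 < α₁) (hβ : 0 < β₁)
    (hcoer : ∀ w : Fin nI ⊕ Fin nB → ℝ,
      α₁ * β₁ * (M.mulVec (w ∘ Sum.inr) ⬝ᵥ (w ∘ Sum.inr)) ≤ A₁.mulVec w ⬝ᵥ w)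
    (e₁ : Fin nI ⊕ Fin nB → ℝ) (e₂prev : Fin nB → ℝ)
    (heq : (A₁ + Matrix.fromBlocks 0 0 0 M).mulVec e₁ = Sum.elim (0 : Fin nI → ℝ) (M.mulVec e₂prev)) :
    Real.sqrt (M.mulVec (e₁ ∘ Sum.inr) ⬝ᵥ (e₁ ∘ Sum.inr))
      ≤ (1 / (1 + α₁ * β₁)) * Real.sqrt (M.mulVec e₂prev ⬝ᵥ e₂prev)
    ∧ 1 / (1 + α₁ * β₁) < 1 := by
  have hk : 1 < 1 + α₁ * β₁ := by nlinarith [mul_pos hα hβ]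
  set x := e₁ ∘ Sum.inr
  have hx : 0 ≤ M *ᵥ x ⬝ᵥ x := by
    simpa [dotProduct_comm] using hM.posSemidef.dotProduct_mulVec_nonneg x
  have hcontract : (1 + α₁ * β₁) * √(M *ᵥ x ⬝ᵥ x) ^ 2
      ≤ √(M *ᵥ e₂prev ⬝ᵥ e₂prev) * √(M *ᵥ x ⬝ᵥ x) := by
    rw [Real.sq_sqrt hx]
    calc (1 + α₁ * β₁) * (M *ᵥ x ⬝ᵥ x) ≤ A₁ *ᵥ e₁ ⬝ᵥ e₁ + M *ᵥ x ⬝ᵥ x := by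
          linarith [hcoer e₁]
      _ = M *ᵥ e₂prev ⬝ᵥ x := dotProduct_add_eq_of_mulVec_add_fromBlocks_eq A₁ M heq
      _ ≤ _ := hM.posSemidef.dotProduct_mulVec_le_sqrt_mul_sqrt e₂prev x
  refine ⟨?_, (div_lt_one (by linarith)).2 hk⟩
  rw [one_div_mul_eq_div, le_div_iff₀ (by linarith), mul_comm]
  exact mul_le_of_mul_sq_le_mul (Real.sqrt_nonneg _) (Real.sqrt_nonneg _) hcontract

open Matrix in
/-- First half of Lemma 5.2: contraction of the interface error in one
Gauss–Seidel half-step on subdomain Ω₁, with rate r = 1/(1+α₁β₁). -/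
theorem stmt8 {nI nB : ℕ}
    (A₁ : Matrix (Fin nI ⊕ Fin nB) (Fin nI ⊕ Fin nB) ℝ) (hA₁ : A₁.PosDef)
    (M : Matrix (Fin nB) (Fin nB) ℝ) (hM : M.PosDef)
    (α₁ β₁ : ℝ) (hα : 0 < α₁) (hβ : 0 < β₁)
    (hcoer : ∀ w : Fin nI ⊕ Fin nB → ℝ,
      α₁ * β₁ * (M.mulVec (w ∘ Sum.inr) ⬝ᵥ (w ∘ Sum.inr)) ≤ A₁.mulVec w ⬝ᵥ w)
    (e₁ : Fin nI ⊕ Fin nB → ℝ) (e₂prev : Fin nB → ℝ)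
    (heq : (A₁ + Matrix.fromBlocks 0 0 0 M).mulVec e₁ = Sum.elim (0 : Fin nI → ℝ) (M.mulVec e₂prev)) :
    Real.sqrt (M.mulVec (e₁ ∘ Sum.inr) ⬝ᵥ (e₁ ∘ Sum.inr))
      ≤ (1 / (1 + α₁ * β₁)) * Real.sqrt (M.mulVec e₂prev ⬝ᵥ e₂prev)
    ∧ 1 / (1 + α₁ * β₁) < 1 :=
  stmt8_general A₁ M hM α₁ β₁ hα hβ hcoer e₁ e₂prev heq
end

section
/- Let A₂ be symmetric positive semidefinite on ℝ^{m_I+m_B}, M symmetric positive definite on ℝ^{m_B}, and Ã₂ = A₂ + diag(0, M). If Ã₂ e₂ = (0, M e₁_B)ᵀ for e₂ = (e_{2,I}, e_{2,B}), then ‖e_{2,B}‖_M ≤ ‖e_{1,B}‖_M. -/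
/-!
Testing the equation against `e₂` gives the energy identity
`⟨A₂e₂, e₂⟩ + ‖e₂_B‖²_M = ⟨M e₁_B, e₂_B⟩`. Since `A₂ ⪰ 0`, this gives `‖e₂_B‖²_M ≤ ⟨M e₁_B, e₂_B⟩`,
and expanding `0 ≤ ‖e₁_B - e₂_B‖²_M` turns that into `‖e₂_B‖²_M ≤ ‖e₁_B‖²_M`.
-/

open Matrix

section EnergyIdentity

variable {R : Type*} [CommSemiring R] {m n : Type*} [Fintype m] [Fintype n]

theorem Matrix.dotProduct_fromBlocks_zero_zero_zero_mulVec (M : Matrix n n R) (e : m ⊕ n → R) :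
    e ⬝ᵥ fromBlocks 0 0 0 M *ᵥ e = M *ᵥ (e ∘ Sum.inr) ⬝ᵥ (e ∘ Sum.inr) := by
  rw [← Sum.elim_comp_inl_inr e, fromBlocks_mulVec, sumElim_dotProduct_sumElim]
  simp [dotProduct_comm]

theorem Matrix.dotProduct_sumElim_zero (e : m ⊕ n → R) (g : n → R) :
    e ⬝ᵥ Sum.elim (0 : m → R) g = g ⬝ᵥ (e ∘ Sum.inr) := by
  rw [← Sum.elim_comp_inl_inr e, sumElim_dotProduct_sumElim]
  simp [dotProduct_comm]

theorem Matrix.energy_eq_of_add_fromBlocks_mulVec_eq {A : Matrix (m ⊕ n) (m ⊕ n) R}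
    {M : Matrix n n R} {e : m ⊕ n → R} {f : n → R}
    (heq : (A + fromBlocks 0 0 0 M) *ᵥ e = Sum.elim (0 : m → R) (M *ᵥ f)) :
    e ⬝ᵥ A *ᵥ e + M *ᵥ (e ∘ Sum.inr) ⬝ᵥ (e ∘ Sum.inr) = M *ᵥ f ⬝ᵥ (e ∘ Sum.inr) := by
  rw [← dotProduct_fromBlocks_zero_zero_zero_mulVec, ← dotProduct_add, ← add_mulVec, heq,
    dotProduct_sumElim_zero]

end EnergyIdentity

theorem Matrix.PosSemidef.mulVec_dotProduct_comm {n : Type*} [Fintype n] {M : Matrix n n ℝ}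
    (hM : M.PosSemidef) (x y : n → ℝ) : M *ᵥ x ⬝ᵥ y = M *ᵥ y ⬝ᵥ x := by
  rw [dotProduct_comm, dotProduct_mulVec, ← mulVec_transpose,
    ← conjTranspose_eq_transpose_of_trivial, hM.isHermitian.eq]

theorem Matrix.PosSemidef.mulVec_dotProduct_self_le_of_le {n : Type*} [Fintype n]
    {M : Matrix n n ℝ} (hM : M.PosSemidef) {x y : n → ℝ} (h : M *ᵥ x ⬝ᵥ x ≤ M *ᵥ y ⬝ᵥ x) :
    M *ᵥ x ⬝ᵥ x ≤ M *ᵥ y ⬝ᵥ y := by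
  have hdiff : 0 ≤ M *ᵥ (y - x) ⬝ᵥ (y - x) := by
    simpa [dotProduct_comm] using hM.dotProduct_mulVec_nonneg (y - x)
  have hexpand : M *ᵥ (y - x) ⬝ᵥ (y - x)
      = M *ᵥ y ⬝ᵥ y - 2 * (M *ᵥ y ⬝ᵥ x) + M *ᵥ x ⬝ᵥ x := by
    rw [mulVec_sub, sub_dotProduct, dotProduct_sub, dotProduct_sub, hM.mulVec_dotProduct_comm x y]
    ring
  linarith

open Matrix in
/-- Second half of Lemma 5.2: non-expansiveness of the interface error in the
Gauss–Seidel half-step on subdomain Ω₂ (A₂ only positive semidefinite). -/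
theorem stmt9 {mI mB : ℕ}
    (A₂ : Matrix (Fin mI ⊕ Fin mB) (Fin mI ⊕ Fin mB) ℝ) (hA₂ : A₂.PosSemidef)
    (M : Matrix (Fin mB) (Fin mB) ℝ) (hM : M.PosDef)
    (e₂ : Fin mI ⊕ Fin mB → ℝ) (e₁B : Fin mB → ℝ)
    (heq : (A₂ + Matrix.fromBlocks 0 0 0 M).mulVec e₂ = Sum.elim (0 : Fin mI → ℝ) (M.mulVec e₁B)) :
    Real.sqrt (M.mulVec (e₂ ∘ Sum.inr) ⬝ᵥ (e₂ ∘ Sum.inr))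
      ≤ Real.sqrt (M.mulVec e₁B ⬝ᵥ e₁B) := by
  have henergy := energy_eq_of_add_fromBlocks_mulVec_eq heq
  have hA₂e₂ : 0 ≤ e₂ ⬝ᵥ A₂ *ᵥ e₂ := by simpa using hA₂.dotProduct_mulVec_nonneg e₂
  exact Real.sqrt_le_sqrt <| hM.posSemidef.mulVec_dotProduct_self_le_of_le (by linarith)
end
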